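/- arXiv:1709.04415 — 3 statements merged into one kernel-verified Lean document; each statement's English description precedes it below -/
import Mathlib

section
/- Subadditivity of conditional value-at-risk (Pflug, 2000): for any two integrable real-valued random variables X₁ and X₂ on a common probability space and every confidence level γ ∈ (0,1), CVaR_γ(X₁ + X₂) ≤ CVaR_γ(X₁) + CVaR_γ(X₂). Together with translation invariance, positive homogeneity, and monotonicity, this shows that CVaR_γ is a coherent risk measure. -/
open MeasureTheory

/-- Value-at-risk of the return `X` at confidence level `β`:
`VaR_β(X) = inf {x ∈ ℝ : ℙ(x + X < 0) ≤ 1 - β}`. -/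
noncomputable def VaR {Ω : Type*} [MeasurableSpace Ω] (P : Measure Ω) (X : Ω → ℝ) (β : ℝ) : ℝ :=
  sInf {x : ℝ | (P {ω | x + X ω < 0}).toReal ≤ 1 - β}

/-- Conditional value-at-risk of the return `X` at confidence level `γ`:
`CVaR_γ(X) = (1/(1-γ)) ∫_γ^1 VaR_β(X) dβ`. -/
noncomputable def CVaR {Ω : Type*} [MeasurableSpace Ω] (P : Measure Ω) (X : Ω → ℝ) (γ : ℝ) : ℝ :=
  (1 / (1 - γ)) * ∫ β in γ..1, VaR P X β

/-!
`VaR_β(X)` is the `β`-quantile `q(β)` of the loss `L = -X`, and `q` pushes Lebesgue measure on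
`(0, 1)` forward to the law of `L`. This gives the Rockafellar–Uryasev formula
`∫_γ^1 q = min_t ((1 - γ) t + 𝔼 (L - t)⁺)`, the minimum being attained at `t = q(γ)`.
Evaluating the objective for `L₁ + L₂` at `t = q₁(γ) + q₂(γ)` and using
`(a + b)⁺ ≤ a⁺ + b⁺` gives subadditivity.
-/

open ProbabilityTheory Set

lemma Real.volume_Ioo_zero_one_inter_Iic {c : ℝ} (hc : c ∈ Icc 0 1) :
    volume (Ioo 0 1 ∩ Iic c) = ENNReal.ofReal c := by
  refine le_antisymm ?_ ?_
  · calc volume (Ioo 0 1 ∩ Iic c) ≤ volume (Ioc 0 c) :=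
          measure_mono fun β hβ => ⟨hβ.1.1, hβ.2⟩
      _ = ENNReal.ofReal c := by rw [Real.volume_Ioc, sub_zero]
  · calc ENNReal.ofReal c = volume (Ioo 0 c) := by rw [Real.volume_Ioo, sub_zero]
      _ ≤ volume (Ioo 0 1 ∩ Iic c) :=
          measure_mono fun β hβ => ⟨⟨hβ.1, hβ.2.trans_le hc.2⟩, hβ.2.le⟩

namespace ProbabilityTheory

/-- The left-continuous generalized inverse of the cdf of `μ`. Only its values on `(0, 1)` are
meaningful: elsewhere the set is empty or unbounded below and `sInf` returns `0`. -/
noncomputable def quantile (μ : Measure ℝ) (β : ℝ) : ℝ := sInf {x : ℝ | β ≤ cdf μ x}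

section Quantile

variable {μ : Measure ℝ} {β : ℝ}

lemma nonempty_setOf_le_cdf (hβ : β < 1) : {x : ℝ | β ≤ cdf μ x}.Nonempty :=
  let ⟨x, hx⟩ := ((tendsto_cdf_atTop μ).eventually (lt_mem_nhds hβ)).exists
  ⟨x, hx.le⟩

lemma bddBelow_setOf_le_cdf (hβ : 0 < β) : BddBelow {x : ℝ | β ≤ cdf μ x} := by
  obtain ⟨x₀, hx₀⟩ := ((tendsto_cdf_atBot μ).eventually (gt_mem_nhds hβ)).exists
  refine ⟨x₀, fun y hy => le_of_not_gt fun hyx => ?_⟩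
  exact (hy.trans (monotone_cdf μ hyx.le)).not_gt hx₀

lemma quantile_le_iff (hβ : β ∈ Ioo 0 1) (x : ℝ) : quantile μ β ≤ x ↔ β ≤ cdf μ x := by
  refine ⟨fun h => ?_, fun h => csInf_le (bddBelow_setOf_le_cdf hβ.1) h⟩
  have hright : ∀ y ∈ Ioi x, β ≤ cdf μ y := fun y hy => by
    obtain ⟨z, hz, hzy⟩ := exists_lt_of_csInf_lt (nonempty_setOf_le_cdf hβ.2) (h.trans_lt hy)
    exact hz.trans (monotone_cdf μ hzy.le)
  exact ge_of_tendsto (((cdf μ).right_continuous x).mono Ioi_subset_Ici_self)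
    (eventually_nhdsWithin_of_forall hright)

lemma monotoneOn_quantile : MonotoneOn (quantile μ) (Ioo 0 1) := fun _ hβ _ hβ' hle =>
  csInf_le_csInf (bddBelow_setOf_le_cdf hβ.1) (nonempty_setOf_le_cdf hβ'.2)
    fun _ hx => hle.trans hx

lemma aemeasurable_quantile : AEMeasurable (quantile μ) (volume.restrict (Ioo 0 1)) :=
  aemeasurable_restrict_of_monotoneOn measurableSet_Ioo monotoneOn_quantile

variable [IsProbabilityMeasure μ]

lemma map_quantile_volume_restrict_Ioo : (volume.restrict (Ioo 0 1)).map (quantile μ) = μ := by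
  have : IsProbabilityMeasure (volume.restrict (Ioo (0 : ℝ) 1)) := ⟨by simp⟩
  have := Measure.isProbabilityMeasure_map (μ := volume.restrict (Ioo (0 : ℝ) 1))
    (aemeasurable_quantile (μ := μ))
  refine Measure.ext_of_Iic _ _ fun x => ?_
  have hpre : quantile μ ⁻¹' Iic x ∩ Ioo 0 1 = Ioo 0 1 ∩ Iic (cdf μ x) := by
    ext β
    simp only [mem_inter_iff, mem_preimage, mem_Iic]
    exact ⟨fun h => ⟨h.2, (quantile_le_iff h.2 x).1 h.1⟩,
      fun h => ⟨(quantile_le_iff h.1 x).2 h.2, h.1⟩⟩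
  rw [Measure.map_apply_of_aemeasurable aemeasurable_quantile measurableSet_Iic,
    Measure.restrict_apply' measurableSet_Ioo, hpre,
    Real.volume_Ioo_zero_one_inter_Iic ⟨cdf_nonneg μ x, cdf_le_one μ x⟩, ofReal_cdf]

lemma integral_comp_quantile {f : ℝ → ℝ} (hf : AEStronglyMeasurable f μ) :
    ∫ β in Ioo 0 1, f (quantile μ β) = ∫ x, f x ∂μ := by
  have hmap := map_quantile_volume_restrict_Ioo (μ := μ)
  rw [← hmap] at hf
  rw [← integral_map aemeasurable_quantile hf, hmap]

lemma integrableOn_quantile (hμ : Integrable id μ) : IntegrableOn (quantile μ) (Ioo 0 1) :=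
  (integrable_map_measure aestronglyMeasurable_id aemeasurable_quantile).1
    (by rwa [map_quantile_volume_restrict_Ioo])

end Quantile

section RockafellarUryasev

variable {ν : Measure ℝ} [IsProbabilityMeasure ν] {γ : ℝ}

/-- The integrand on the right is nonnegative, and vanishes on `(0, 1)` when `t = quantile ν γ`. -/
lemma add_integral_posPart_sub_setIntegral_quantile (hν : Integrable id ν) (hγ : γ ∈ Icc 0 1)
    (t : ℝ) :
    (1 - γ) * t + (∫ x, max (x - t) 0 ∂ν) - ∫ β in Ioo γ 1, quantile ν β =
      ∫ β in Ioo 0 1,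
        (max (quantile ν β - t) 0 - (Ioo γ 1).indicator (fun β => quantile ν β - t) β) := by
  have hq := integrableOn_quantile hν
  have hconst : IntegrableOn (fun _ => t) (Ioo (0 : ℝ) 1) :=
    integrableOn_const measure_Ioo_lt_top.ne
  have hqt : IntegrableOn (fun β => quantile ν β - t) (Ioo 0 1) := hq.sub hconst
  have hsub : Ioo γ 1 ⊆ Ioo 0 1 := Ioo_subset_Ioo_left hγ.1
  rw [integral_sub hqt.pos_part (hqt.indicator measurableSet_Ioo),
    setIntegral_indicator measurableSet_Ioo, inter_eq_right.2 hsub,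
    integral_sub (hq.mono_set hsub) (hconst.mono_set hsub), setIntegral_const,
    Real.volume_real_Ioo_of_le hγ.2, smul_eq_mul,
    integral_comp_quantile (f := fun x => max (x - t) 0) (by fun_prop)]
  ring

lemma setIntegral_quantile_le (hν : Integrable id ν) (hγ : γ ∈ Icc 0 1) (t : ℝ) :
    ∫ β in Ioo γ 1, quantile ν β ≤ (1 - γ) * t + ∫ x, max (x - t) 0 ∂ν := by
  have hgap := add_integral_posPart_sub_setIntegral_quantile hν hγ t
  have hnonneg : 0 ≤ ∫ β in Ioo 0 1,
      (max (quantile ν β - t) 0 - (Ioo γ 1).indicator (fun β => quantile ν β - t) β) := by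
    refine setIntegral_nonneg measurableSet_Ioo fun β _ => sub_nonneg.2 ?_
    by_cases hβ : β ∈ Ioo γ 1
    · simp only [indicator_of_mem hβ, le_max_left]
    · simp only [indicator_of_notMem hβ, le_max_right]
  linarith

lemma setIntegral_quantile_eq (hν : Integrable id ν) (hγ : γ ∈ Ioo 0 1) :
    ∫ β in Ioo γ 1, quantile ν β =
      (1 - γ) * quantile ν γ + ∫ x, max (x - quantile ν γ) 0 ∂ν := by
  have hgap := add_integral_posPart_sub_setIntegral_quantile hν (Ioo_subset_Icc_self hγ)
    (quantile ν γ)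
  have hzero : ∫ β in Ioo 0 1, (max (quantile ν β - quantile ν γ) 0 -
      (Ioo γ 1).indicator (fun β => quantile ν β - quantile ν γ) β) = 0 := by
    refine setIntegral_eq_zero_of_forall_eq_zero fun β hβ => sub_eq_zero.2 ?_
    rcases le_or_gt β γ with hβγ | hγβ
    · rw [indicator_of_notMem fun h => h.1.not_ge hβγ]
      exact max_eq_right (sub_nonpos.2 (monotoneOn_quantile hβ hγ hβγ))
    · rw [indicator_of_mem (show β ∈ Ioo γ 1 from ⟨hγβ, hβ.2⟩)]
      exact max_eq_left (sub_nonneg.2 (monotoneOn_quantile hγ hβ hγβ.le))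
  linarith

end RockafellarUryasev

section Subadditivity

variable {Ω : Type*} [MeasurableSpace Ω] {P : Measure Ω} {L : Ω → ℝ}

lemma integrable_id_map (hL : Integrable L P) : Integrable id (P.map L) :=
  (integrable_map_measure aestronglyMeasurable_id hL.aemeasurable).2 hL

lemma integral_map_posPart_sub (hL : AEMeasurable L P) (t : ℝ) :
    ∫ x, max (x - t) 0 ∂(P.map L) = ∫ ω, max (L ω - t) 0 ∂P :=
  integral_map hL (by fun_prop)

lemma setIntegral_quantile_map_add_le [IsProbabilityMeasure P] {L₁ L₂ : Ω → ℝ}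
    (h₁ : Integrable L₁ P) (h₂ : Integrable L₂ P) {γ : ℝ} (hγ : γ ∈ Ioo 0 1) :
    ∫ β in Ioo γ 1, quantile (P.map (L₁ + L₂)) β ≤
      (∫ β in Ioo γ 1, quantile (P.map L₁) β) + ∫ β in Ioo γ 1, quantile (P.map L₂) β := by
  have h₁₂ := h₁.add h₂
  have := Measure.isProbabilityMeasure_map (μ := P) h₁.aemeasurable
  have := Measure.isProbabilityMeasure_map (μ := P) h₂.aemeasurable
  have := Measure.isProbabilityMeasure_map (μ := P) h₁₂.aemeasurable
  set a := quantile (P.map L₁) γ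
  set b := quantile (P.map L₂) γ
  have hposPart : ∫ ω, max ((L₁ + L₂) ω - (a + b)) 0 ∂P ≤
      ∫ ω, max (L₁ ω - a) 0 ∂P + ∫ ω, max (L₂ ω - b) 0 ∂P := by
    have hint {L : Ω → ℝ} (hL : Integrable L P) (t : ℝ) :
        Integrable (fun ω => max (L ω - t) 0) P :=
      (hL.sub (integrable_const t)).pos_part
    rw [← integral_add (hint h₁ a) (hint h₂ b)]
    refine integral_mono (hint h₁₂ _) ((hint h₁ a).add (hint h₂ b)) fun ω => ?_
    have hsplit : (L₁ + L₂) ω - (a + b) = (L₁ ω - a) + (L₂ ω - b) := by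
      simp only [Pi.add_apply]; ring
    rw [hsplit]
    exact max_le (add_le_add (le_max_left _ _) (le_max_left _ _))
      (add_nonneg (le_max_right _ _) (le_max_right _ _))
  calc ∫ β in Ioo γ 1, quantile (P.map (L₁ + L₂)) β
      ≤ (1 - γ) * (a + b) + ∫ ω, max ((L₁ + L₂) ω - (a + b)) 0 ∂P := by
        rw [← integral_map_posPart_sub h₁₂.aemeasurable]
        exact setIntegral_quantile_le (integrable_id_map h₁₂) (Ioo_subset_Icc_self hγ) _
    _ ≤ ((1 - γ) * a + ∫ ω, max (L₁ ω - a) 0 ∂P) +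
          ((1 - γ) * b + ∫ ω, max (L₂ ω - b) 0 ∂P) := by
        linarith
    _ = (∫ β in Ioo γ 1, quantile (P.map L₁) β) + ∫ β in Ioo γ 1, quantile (P.map L₂) β := by
        rw [setIntegral_quantile_eq (integrable_id_map h₁) hγ,
          setIntegral_quantile_eq (integrable_id_map h₂) hγ,
          integral_map_posPart_sub h₁.aemeasurable, integral_map_posPart_sub h₂.aemeasurable]

end Subadditivity

end ProbabilityTheory

section ValueAtRisk

variable {Ω : Type*} [MeasurableSpace Ω] {P : Measure Ω} [IsProbabilityMeasure P] {X : Ω → ℝ}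

lemma VaR_eq_quantile (hX : AEMeasurable X P) (β : ℝ) : VaR P X β = quantile (P.map (-X)) β := by
  have := Measure.isProbabilityMeasure_map hX.neg
  have hloss (x : ℝ) : {ω | x + X ω < 0} = (-X) ⁻¹' (Iic x)ᶜ := by
    ext ω
    exact (lt_neg_iff_add_neg (a := x) (b := X ω)).symm.trans not_le.symm
  simp only [VaR, quantile, hloss, ← measureReal_def,
    ← map_measureReal_apply_of_aemeasurable hX.neg measurableSet_Iic.compl,
    probReal_compl_eq_one_sub measurableSet_Iic, ← cdf_eq_real, sub_le_sub_iff_left]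

lemma CVaR_eq_setIntegral_quantile (hX : AEMeasurable X P) {γ : ℝ} (hγ : γ ≤ 1) :
    CVaR P X γ = 1 / (1 - γ) * ∫ β in Ioo γ 1, quantile (P.map (-X)) β := by
  simp only [CVaR, intervalIntegral.integral_of_le hγ, integral_Ioc_eq_integral_Ioo,
    VaR_eq_quantile hX]

end ValueAtRisk

/-- Subadditivity of conditional value-at-risk (Pflug, 2000):
`CVaR_γ(X₁ + X₂) ≤ CVaR_γ(X₁) + CVaR_γ(X₂)`. -/
theorem CVaR_subadditive {Ω : Type*} [MeasurableSpace Ω]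
    (P : Measure Ω) [IsProbabilityMeasure P] (X₁ X₂ : Ω → ℝ)
    (hX₁ : Integrable X₁ P) (hX₂ : Integrable X₂ P)
    (γ : ℝ) (hγ : γ ∈ Set.Ioo (0 : ℝ) 1) :
    CVaR P (fun ω => X₁ ω + X₂ ω) γ ≤ CVaR P X₁ γ + CVaR P X₂ γ := by
  change CVaR P (X₁ + X₂) γ ≤ _
  rw [CVaR_eq_setIntegral_quantile (hX₁.add hX₂).aemeasurable hγ.2.le,
    CVaR_eq_setIntegral_quantile hX₁.aemeasurable hγ.2.le,
    CVaR_eq_setIntegral_quantile hX₂.aemeasurable hγ.2.le, neg_add, ← mul_add]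
  exact mul_le_mul_of_nonneg_left (setIntegral_quantile_map_add_le hX₁.neg hX₂.neg hγ)
    (one_div_nonneg.2 (sub_nonneg.2 hγ.2.le))
end

section
/- Joint convexity of the Rockafellar–Uryasev performance function: let R be an integrable ℝ^K-valued random vector on a probability space and γ ∈ (0,1). Then the function F_γ(u, α) := α + (1/(1−γ)) · E[ max(−uᵀR − α, 0) ] is a convex function of the pair (u, α) on ℝ^K × ℝ. -/
open MeasureTheory

lemma RU_integrable {Ω : Type*} [MeasurableSpace Ω]
    (P : Measure Ω) [IsProbabilityMeasure P] {K : ℕ}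
    (R : Ω → Fin K → ℝ) (hR : ∀ i, Integrable (fun ω => R ω i) P)
    (u : Fin K → ℝ) (α : ℝ) :
    Integrable (fun ω => max (-(∑ i, u i * R ω i) - α) 0) P := by
  have h1 : Integrable (fun ω => -(∑ i, u i * R ω i) - α) P := by
    apply Integrable.sub _ (integrable_const α)
    exact (integrable_finset_sum _ (fun i _ => (hR i).const_mul (u i))).neg
  exact h1.pos_part

/-- Joint convexity of the Rockafellar–Uryasev performance function: for an integrable
`ℝ^K`-valued return vector `R` and `γ ∈ (0,1)`, the function
`F_γ(u, α) = α + (1/(1-γ)) · E[max(-uᵀR - α, 0)]` is convex in the pair `(u, α)`. -/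
theorem RU_performance_convexOn {Ω : Type*} [MeasurableSpace Ω]
    (P : Measure Ω) [IsProbabilityMeasure P] {K : ℕ}
    (R : Ω → Fin K → ℝ) (hR : ∀ i, Integrable (fun ω => R ω i) P)
    (γ : ℝ) (hγ : γ ∈ Set.Ioo (0 : ℝ) 1) :
    ConvexOn ℝ Set.univ
      (fun p : (Fin K → ℝ) × ℝ =>
        p.2 + (1 / (1 - γ)) * ∫ ω, max (-(∑ i, p.1 i * R ω i) - p.2) 0 ∂P) := by
  have hc : (0 : ℝ) < 1 / (1 - γ) := by
    have : (0:ℝ) < 1 - γ := by linarith [hγ.2]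
    positivity
  refine ⟨convex_univ, ?_⟩
  rintro ⟨u, α⟩ - ⟨v, β⟩ - a b ha hb hab
  simp only [Prod.fst_add, Prod.snd_add, Prod.smul_fst, Prod.smul_snd, smul_eq_mul]
  have key : ∀ ω, max (-(∑ i, (a * u i + b * v i) * R ω i) - (a * α + b * β)) 0
      ≤ a * max (-(∑ i, u i * R ω i) - α) 0 + b * max (-(∑ i, v i * R ω i) - β) 0 := by
    intro ω
    have heq : -(∑ i, (a * u i + b * v i) * R ω i) - (a * α + b * β)
        = a * (-(∑ i, u i * R ω i) - α) + b * (-(∑ i, v i * R ω i) - β) := by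
      have hs : ∑ i, (a * u i + b * v i) * R ω i
          = a * ∑ i, u i * R ω i + b * ∑ i, v i * R ω i := by
        rw [Finset.mul_sum, Finset.mul_sum, ← Finset.sum_add_distrib]
        exact Finset.sum_congr rfl fun i _ => by ring
      rw [hs]; ring
    rw [heq]
    apply max_le
    · exact add_le_add (mul_le_mul_of_nonneg_left (le_max_left _ _) ha)
        (mul_le_mul_of_nonneg_left (le_max_left _ _) hb)
    · have := mul_nonneg ha (le_max_right (-(∑ i, u i * R ω i) - α) 0)
      have := mul_nonneg hb (le_max_right (-(∑ i, v i * R ω i) - β) 0)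
      linarith
  have hInt : ∀ (w : Fin K → ℝ) (c : ℝ),
      Integrable (fun ω => max (-(∑ i, w i * R ω i) - c) 0) P :=
    fun w c => RU_integrable P R hR w c
  have hmono : (∫ ω, max (-(∑ i, (a * u i + b * v i) * R ω i) - (a * α + b * β)) 0 ∂P)
      ≤ a * (∫ ω, max (-(∑ i, u i * R ω i) - α) 0 ∂P)
        + b * (∫ ω, max (-(∑ i, v i * R ω i) - β) 0 ∂P) := by
    rw [← integral_const_mul, ← integral_const_mul, ← integral_add
      (((hInt u α).const_mul a)) (((hInt v β).const_mul b))]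
    exact integral_mono (hInt _ _) (((hInt u α).const_mul a).add ((hInt v β).const_mul b)) key
  have hcmp : (fun ω => max (-(∑ i, (a • u + b • v) i * R ω i) - (a * α + b * β)) 0)
      = fun ω => max (-(∑ i, (a * u i + b * v i) * R ω i) - (a * α + b * β)) 0 := by
    funext ω; simp [Pi.add_apply, Pi.smul_apply, smul_eq_mul]
  rw [hcmp]
  nlinarith [mul_le_mul_of_nonneg_left hmono hc.le]
end

section
/- UCB1 regret bound (Theorem 2.1, Auer et al. 2002): consider K > 1 arms where for each arm i the rewards R_{i,1}, R_{i,2}, … are i.i.d. random variables with values in [0,1] and mean μ_i, independent across arms; let μ* := max_i μ_i. The UCB1 policy selects I_t := t for t ≤ K, and for t > K selects I_t := argmax_{i} ( x̄_i(t−1) + √(2·ln t / T_i(t−1)) ), where T_i(t−1) is the number of times arm i was played in the first t−1 trials and x̄_i(t−1) is the empirical mean reward of arm i over those plays. Then for every number of trials n, the pseudo-regret ξ̂(n) := Σ_{i : μ_i < μ*} (μ* − μ_i)·E[T_i(n)] satisfies ξ̂(n) ≤ 8·Σ_{i : μ_i < μ*} ( ln n / (μ* − μ_i) ) + (1 + π²/3)·Σ_{i=1}^{K}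 (μ* − μ_i). -/
open MeasureTheory ProbabilityTheory

/-- `playCount I i n ω`: the number of times arm `i` is played by the policy `I` during the
first `n` trials (trials are indexed `0, 1, …, n-1`). -/
def playCount {Ω : Type*} {K : ℕ} (I : ℕ → Ω → Fin K) (i : Fin K) (n : ℕ) (ω : Ω) : ℕ :=
  ((Finset.range n).filter fun t => I t ω = i).card

/-- `empMean R I i n ω`: the empirical mean reward of arm `i` over its plays during the first
`n` trials, where `R i s` is the reward received from the `(s+1)`-th play of arm `i`. -/
noncomputable def empMean {Ω : Type*} {K : ℕ} (R : Fin K → ℕ → Ω → ℝ) (I : ℕ → Ω → Fin K)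
    (i : Fin K) (n : ℕ) (ω : Ω) : ℝ :=
  (∑ s ∈ Finset.range (playCount I i n ω), R i s ω) / (playCount I i n ω)

/-- The UCB1 index of arm `i` before (0-indexed) trial `t`, i.e. after `t` completed trials:
empirical mean plus the exploration bonus `√(2 ln t' / T_i(t-1))` where `t' = t + 1` is the
1-indexed trial number. -/
noncomputable def ucbIndex {Ω : Type*} {K : ℕ} (R : Fin K → ℕ → Ω → ℝ) (I : ℕ → Ω → Fin K)
    (i : Fin K) (t : ℕ) (ω : Ω) : ℝ :=
  empMean R I i t ω + Real.sqrt (2 * Real.log (t + 1) / (playCount I i t ω))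

/-- `I` is a UCB1 policy: during the first `K` trials each arm is played once, and afterwards
the policy plays an arm maximizing the UCB1 index. -/
def IsUCB1Policy {Ω : Type*} {K : ℕ} (R : Fin K → ℕ → Ω → ℝ) (I : ℕ → Ω → Fin K) : Prop :=
  (∀ (t : ℕ) (ht : t < K), ∀ ω, I t ω = ⟨t, ht⟩) ∧
  (∀ t : ℕ, K ≤ t → ∀ ω, ∀ j : Fin K, ucbIndex R I j t ω ≤ ucbIndex R I (I t ω) t ω)

/-!
If UCB1 plays a suboptimal arm `i` at trial `t` although `i` has already been played
`ℓ ≥ 8 ln n / Δᵢ²` times, then the bonus of `i` is at most `Δᵢ / 2`, so either the empirical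
mean of `i` overshoots `μᵢ` by its bonus or that of an optimal arm undershoots `μ*` by its bonus.
For a fixed number of samples, Hoeffding's inequality bounds each of these by `(t + 1)⁻⁴`; a union
bound over the at most `t` possible sample counts of each arm gives `2t / (t + 1)⁴`, whose sum
over `t` is at most `2`. Hence `E[Tᵢ(n)] ≤ ℓ + 2 ≤ 8 ln n / Δᵢ² + 3`, and `3 ≤ 1 + π² / 3`.
-/

open Real Finset

section Hoeffding
variable {Ω : Type*} [MeasurableSpace Ω] {P : Measure Ω}

lemma hasSubgaussianMGF_sub_of_mem_Icc_zero_one [IsProbabilityMeasure P] {X : Ω → ℝ}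
    (hX : Measurable X) (h01 : ∀ ω, X ω ∈ Set.Icc (0 : ℝ) 1) {m : ℝ} (hm : P[X] = m) :
    HasSubgaussianMGF (fun ω ↦ X ω - m) (1 / 4) P := by
  have h := hasSubgaussianMGF_of_mem_Icc hX.aemeasurable (ae_of_all P h01)
  rw [hm] at h
  convert h using 1
  norm_num

lemma measureReal_mul_le_sum_range_le {Y : ℕ → Ω → ℝ} (hind : iIndepFun Y P)
    (hY : ∀ u, HasSubgaussianMGF (Y u) (1 / 4) P) (s : ℕ) {ε : ℝ} (hε : 0 ≤ ε) :
    P.real {ω | s * ε ≤ ∑ u ∈ range s, Y u ω} ≤ exp (-2 * s * ε ^ 2) := by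
  refine (HasSubgaussianMGF.measure_sum_range_ge_le_of_iIndepFun hind (fun u _ ↦ hY u)
    (by positivity)).trans_eq ?_
  rcases Nat.eq_zero_or_pos s with rfl | hs
  · simp
  · congr 1
    field_simp
    push_cast
    ring

variable [IsProbabilityMeasure P] {X : ℕ → Ω → ℝ} (hX : ∀ u, Measurable (X u))
  (h01 : ∀ u ω, X u ω ∈ Set.Icc (0 : ℝ) 1) (hind : iIndepFun X P) {m : ℝ}
  (hm : ∀ u, P[X u] = m) (s : ℕ) {ε : ℝ} (hε : 0 ≤ ε)
include hX h01 hind hm hε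

lemma measureReal_mul_add_le_sum_range_le :
    P.real {ω | s * (m + ε) ≤ ∑ u ∈ range s, X u ω} ≤ exp (-2 * s * ε ^ 2) := by
  have hind' : iIndepFun (fun u ω ↦ X u ω - m) P :=
    hind.comp (fun _ x ↦ x - m) fun _ ↦ measurable_id.sub_const m
  convert measureReal_mul_le_sum_range_le hind'
    (fun u ↦ hasSubgaussianMGF_sub_of_mem_Icc_zero_one (hX u) (h01 u) (hm u)) s hε using 2
  ext ω
  simp only [Set.mem_ofPred_eq, sum_sub_distrib, sum_const, card_range, nsmul_eq_mul]
  constructor <;> intro h <;> linarith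

lemma measureReal_sum_range_le_mul_sub_le :
    P.real {ω | ∑ u ∈ range s, X u ω ≤ s * (m - ε)} ≤ exp (-2 * s * ε ^ 2) := by
  have hind' : iIndepFun (fun u ω ↦ -(X u ω - m)) P :=
    hind.comp (fun _ x ↦ -(x - m)) fun _ ↦ (measurable_id.sub_const m).neg
  convert measureReal_mul_le_sum_range_le hind'
    (fun u ↦ (hasSubgaussianMGF_sub_of_mem_Icc_zero_one (hX u) (h01 u) (hm u)).neg) s hε using 2
  ext ω
  simp only [Set.mem_ofPred_eq, sum_neg_distrib, sum_sub_distrib, sum_const, card_range,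
    nsmul_eq_mul]
  constructor <;> intro h <;> linarith

end Hoeffding

section Bandit
variable {Ω : Type*} {K : ℕ} {I : ℕ → Ω → Fin K} {i j : Fin K} {t ℓ : ℕ} {ω : Ω}

lemma playCount_succ (I : ℕ → Ω → Fin K) (i : Fin K) (t : ℕ) (ω : Ω) :
    playCount I i (t + 1) ω = playCount I i t ω + if I t ω = i then 1 else 0 := by
  simp only [playCount, card_filter, sum_range_succ]

lemma playCount_le (I : ℕ → Ω → Fin K) (i : Fin K) (t : ℕ) (ω : Ω) : playCount I i t ω ≤ t :=
  (card_filter_le _ _).trans_eq (card_range t)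

lemma playCount_mono (I : ℕ → Ω → Fin K) (i : Fin K) (ω : Ω) :
    Monotone fun t ↦ playCount I i t ω :=
  fun _ _ h ↦ card_le_card (filter_subset_filter _ (range_subset_range.2 h))

lemma playCount_lt_playCount {t t' : ℕ} (h : t < t') (hit : I t ω = i) :
    playCount I i t ω < playCount I i t' ω := by
  have : playCount I i (t + 1) ω ≤ playCount I i t' ω := playCount_mono I i ω h
  rw [playCount_succ, if_pos hit] at this
  omega

/-- Plays at which the count is below `ℓ` are told apart by that count, so there are at most
`ℓ` of them. -/
lemma playCount_le_add_card_filter (I : ℕ → Ω → Fin K) (i : Fin K) (n ℓ : ℕ) (ω : Ω) :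
    playCount I i n ω ≤ ℓ + #{t ∈ range n | I t ω = i ∧ ℓ ≤ playCount I i t ω} := by
  rw [playCount, ← card_filter_add_card_filter_not (p := fun t ↦ ℓ ≤ playCount I i t ω),
    filter_filter, add_comm]
  gcongr
  refine (card_le_card_of_injOn (fun t ↦ playCount I i t ω) ?_ ?_).trans_eq (card_range ℓ)
  · intro t ht
    simpa using (mem_filter.1 ht).2
  · intro t ht t' ht' heq
    simp only [coe_filter, mem_filter, Set.mem_ofPred_eq] at ht ht'
    by_contra hne
    rcases lt_or_gt_of_ne hne with h | h
    · exact (playCount_lt_playCount h ht.1.2).ne heq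
    · exact (playCount_lt_playCount h ht'.1.2).ne heq.symm

lemma measurable_playCount [MeasurableSpace Ω] (hI : ∀ t, Measurable (I t)) (i : Fin K)
    (n : ℕ) : Measurable (playCount I i n) := by
  change Measurable fun ω ↦ #{t ∈ range n | I t ω = i}
  simp only [card_filter]
  exact Finset.measurable_sum _ fun t _ ↦
    Measurable.ite (hI t (measurableSet_singleton i)) measurable_const measurable_const

noncomputable def ucbRadius (t s : ℕ) : ℝ := √(2 * log (t + 1) / s)

lemma ucbIndex_eq (R : Fin K → ℕ → Ω → ℝ) (I : ℕ → Ω → Fin K) (i : Fin K) (t : ℕ) (ω : Ω) :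
    ucbIndex R I i t ω = empMean R I i t ω + ucbRadius t (playCount I i t ω) :=
  rfl

lemma exp_neg_two_mul_ucbRadius_sq {s : ℕ} (hs : 0 < s) (t : ℕ) :
    exp (-2 * s * ucbRadius t s ^ 2) = ((t + 1) ^ 4 : ℝ)⁻¹ := by
  have ht : (1 : ℝ) ≤ t + 1 := by simp
  have hlog := log_nonneg ht
  rw [ucbRadius, sq_sqrt (by positivity), ← rpow_natCast, ← rpow_neg (by positivity),
    rpow_def_of_pos (by positivity)]
  field_simp
  push_cast
  ring_nf

lemma two_mul_ucbRadius_le {s : ℕ} (hs : 0 < s) {Δ : ℝ} (hΔ : 0 < Δ)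
    (h : 8 * log (t + 1) / Δ ^ 2 ≤ s) : 2 * ucbRadius t s ≤ Δ := by
  have hs' : (0 : ℝ) < s := by exact_mod_cast hs
  rw [div_le_iff₀ (by positivity)] at h
  rw [ucbRadius, ← le_div_iff₀' two_pos, sqrt_le_left (by positivity), div_le_iff₀ hs']
  linarith

namespace IsUCB1Policy
variable {R : Fin K → ℕ → Ω → ℝ}

lemma playCount_eq_zero (hI : IsUCB1Policy R I) (ht : t < K) (hit : I t ω = i) :
    playCount I i t ω = 0 := by
  rw [hI.1 t ht ω] at hit
  subst hit
  refine card_eq_zero.2 (filter_eq_empty_iff.2 fun u hu heq ↦ ?_)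
  have hu : u < t := mem_range.1 hu
  rw [hI.1 u (hu.trans ht) ω, Fin.mk.injEq] at heq
  omega

lemma playCount_pos (hI : IsUCB1Policy R I) (ht : K ≤ t) (j : Fin K) (ω : Ω) :
    0 < playCount I j t ω :=
  card_pos.2 ⟨j, mem_filter.2 ⟨mem_range.2 (j.isLt.trans_le ht), hI.1 j j.isLt ω⟩⟩

lemma deviation_of_play (hI : IsUCB1Policy R I) (ht : K ≤ t) (hit : I t ω = i) {μi μj : ℝ}
    (hrad : 2 * ucbRadius t (playCount I i t ω) ≤ μj - μi) :
    μi + ucbRadius t (playCount I i t ω) ≤ empMean R I i t ω ∨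
      empMean R I j t ω ≤ μj - ucbRadius t (playCount I j t ω) := by
  have hmax := hI.2 t ht ω j
  rw [hit, ucbIndex_eq, ucbIndex_eq] at hmax
  by_contra! h
  linarith [h.1, h.2]

lemma setOf_play_subset (hI : IsUCB1Policy R I) {μi μj : ℝ} (hμ : μi < μj) (hℓ : 0 < ℓ)
    (hℓt : 8 * log (t + 1) / (μj - μi) ^ 2 ≤ ℓ) :
    {ω | I t ω = i ∧ ℓ ≤ playCount I i t ω} ⊆
      (⋃ s ∈ Icc ℓ t, {ω | s * (μi + ucbRadius t s) ≤ ∑ u ∈ range s, R i u ω}) ∪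
        ⋃ s ∈ Icc 1 t, {ω | ∑ u ∈ range s, R j u ω ≤ s * (μj - ucbRadius t s)} := by
  rintro ω ⟨hit, hℓs⟩
  rcases lt_or_ge t K with htK | hKt
  · rw [hI.playCount_eq_zero htK hit] at hℓs
    omega
  have hs : (0 : ℝ) < playCount I i t ω := by exact_mod_cast hℓ.trans_le hℓs
  have hs' := hI.playCount_pos hKt j ω
  have hrad := two_mul_ucbRadius_le (hℓ.trans_le hℓs) (sub_pos.2 hμ)
    (hℓt.trans (by exact_mod_cast hℓs))
  rcases hI.deviation_of_play (j := j) hKt hit hrad with h | h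
  · rw [empMean, le_div_iff₀ hs, mul_comm] at h
    exact Or.inl (Set.mem_iUnion₂.2 ⟨_, mem_Icc.2 ⟨hℓs, playCount_le I i t ω⟩, h⟩)
  · rw [empMean, div_le_iff₀ (by exact_mod_cast hs'), mul_comm] at h
    exact Or.inr (Set.mem_iUnion₂.2 ⟨_, mem_Icc.2 ⟨hs', playCount_le I j t ω⟩, h⟩)

end IsUCB1Policy
end Bandit

lemma sum_range_two_mul_div_pow_four_le (n : ℕ) :
    ∑ t ∈ range n, (2 * t / (t + 1) ^ 4 : ℝ) ≤ 2 := by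
  have telescope : ∀ n : ℕ, ∑ t ∈ range n, (2 * t / (t + 1) ^ 4 : ℝ) ≤ 2 - 2 / (n + 1) := by
    intro n
    induction n with
    | zero => norm_num
    | succ n ih =>
      rw [sum_range_succ]
      have step : (2 * n / (n + 1) ^ 4 : ℝ) ≤ 2 / (n + 1) - 2 / (n + 1 + 1) := by
        rw [div_sub_div _ _ (by positivity) (by positivity),
          div_le_div_iff₀ (by positivity) (by positivity)]
        nlinarith [pow_nonneg (n.cast_nonneg : (0 : ℝ) ≤ n) 3,
          pow_nonneg (n.cast_nonneg : (0 : ℝ) ≤ n) 4]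
      push_cast
      linarith
  linarith [telescope n, (by positivity : (0 : ℝ) ≤ 2 / (n + 1))]

section Regret
variable {Ω : Type*} [MeasurableSpace Ω] {P : Measure Ω} [IsProbabilityMeasure P] {K : ℕ}
  {R : Fin K → ℕ → Ω → ℝ} {I : ℕ → Ω → Fin K} {i j : Fin K} {t ℓ : ℕ}

lemma integral_playCount_le_add_sum_measureReal (hImeas : ∀ t, Measurable (I t)) (i : Fin K)
    (n ℓ : ℕ) :
    ∫ ω, (playCount I i n ω : ℝ) ∂P
      ≤ ℓ + ∑ t ∈ range n, P.real {ω | I t ω = i ∧ ℓ ≤ playCount I i t ω} := by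
  set A : ℕ → Set Ω := fun t ↦ {ω | I t ω = i ∧ ℓ ≤ playCount I i t ω}
  have hA : ∀ t, MeasurableSet (A t) := fun t ↦
    (hImeas t (measurableSet_singleton i)).inter (measurable_playCount hImeas i t measurableSet_Ici)
  have hpointwise : ∀ ω, (playCount I i n ω : ℝ) ≤ ℓ + ∑ t ∈ range n, (A t).indicator 1 ω := by
    intro ω
    have := playCount_le_add_card_filter I i n ℓ ω
    rw [← Nat.cast_le (α := ℝ), Nat.cast_add, natCast_card_filter] at this
    simpa [A, Set.indicator_apply] using this
  have hint : Integrable (fun ω ↦ (ℓ : ℝ) + ∑ t ∈ range n, (A t).indicator 1 ω) P :=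
    (integrable_const _).add (integrable_finsetSum _ fun t _ ↦
      (integrable_const 1).indicator (hA t))
  calc ∫ ω, (playCount I i n ω : ℝ) ∂P
      ≤ ∫ ω, ((ℓ : ℝ) + ∑ t ∈ range n, (A t).indicator 1 ω) ∂P :=
        integral_mono_of_nonneg (ae_of_all _ fun ω ↦ by positivity) hint (ae_of_all _ hpointwise)
    _ = ℓ + ∑ t ∈ range n, P.real (A t) := by
        rw [integral_add (integrable_const _) (integrable_finsetSum _ fun t _ ↦
            (integrable_const 1).indicator (hA t)), integral_const,
          integral_finsetSum _ fun t _ ↦ (integrable_const 1).indicator (hA t)]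
        simp [integral_indicator_one (hA _)]

namespace IsUCB1Policy
variable {μ : Fin K → ℝ} (hI : IsUCB1Policy R I) (hRmeas : ∀ i s, Measurable (R i s))
  (hRrange : ∀ i s ω, R i s ω ∈ Set.Icc (0 : ℝ) 1)
  (hindep : iIndepFun (fun p : Fin K × ℕ ↦ R p.1 p.2) P) (hmean : ∀ i s, P[R i s] = μ i)
include hI hRmeas hRrange hindep hmean

lemma measureReal_play_le (hμ : μ i < μ j) (hℓ : 0 < ℓ)
    (hℓt : 8 * log (t + 1) / (μ j - μ i) ^ 2 ≤ ℓ) :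
    P.real {ω | I t ω = i ∧ ℓ ≤ playCount I i t ω} ≤ 2 * t / (t + 1) ^ 4 := by
  have hindArm : ∀ k, iIndepFun (R k) P := fun k ↦
    hindep.precomp (g := Prod.mk k) (Prod.mk_right_injective k)
  have hover : ∀ s ∈ Icc ℓ t,
      P.real {ω | s * (μ i + ucbRadius t s) ≤ ∑ u ∈ range s, R i u ω} ≤ ((t + 1) ^ 4 : ℝ)⁻¹ :=
    fun s hs ↦ (measureReal_mul_add_le_sum_range_le (hRmeas i) (hRrange i) (hindArm i) (hmean i)
      s (sqrt_nonneg _)).trans_eq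
        (exp_neg_two_mul_ucbRadius_sq (hℓ.trans_le (mem_Icc.1 hs).1) t)
  have hunder : ∀ s ∈ Icc 1 t,
      P.real {ω | ∑ u ∈ range s, R j u ω ≤ s * (μ j - ucbRadius t s)} ≤ ((t + 1) ^ 4 : ℝ)⁻¹ :=
    fun s hs ↦ (measureReal_sum_range_le_mul_sub_le (hRmeas j) (hRrange j) (hindArm j) (hmean j)
      s (sqrt_nonneg _)).trans_eq (exp_neg_two_mul_ucbRadius_sq (mem_Icc.1 hs).1 t)
  have hcard : ∀ a, 0 < a → #(Icc a t) ≤ t := fun a ha ↦ by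
    rw [Nat.card_Icc]
    omega
  calc P.real {ω | I t ω = i ∧ ℓ ≤ playCount I i t ω}
      ≤ ∑ s ∈ Icc ℓ t, P.real {ω | s * (μ i + ucbRadius t s) ≤ ∑ u ∈ range s, R i u ω}
        + ∑ s ∈ Icc 1 t, P.real {ω | ∑ u ∈ range s, R j u ω ≤ s * (μ j - ucbRadius t s)} :=
      (measureReal_mono (hI.setOf_play_subset hμ hℓ hℓt)).trans <| (measureReal_union_le _ _).trans
        (add_le_add (measureReal_biUnion_finset_le _ _) (measureReal_biUnion_finset_le _ _))
    _ ≤ (Icc ℓ t).card • ((t + 1) ^ 4 : ℝ)⁻¹ + (Icc 1 t).card • ((t + 1) ^ 4 : ℝ)⁻¹ :=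
      add_le_add (sum_le_card_nsmul _ _ _ hover) (sum_le_card_nsmul _ _ _ hunder)
    _ ≤ t * ((t + 1) ^ 4 : ℝ)⁻¹ + t * ((t + 1) ^ 4 : ℝ)⁻¹ := by
      simp only [nsmul_eq_mul]
      gcongr
      exacts [hcard ℓ hℓ, hcard 1 one_pos]
    _ = 2 * t / (t + 1) ^ 4 := by ring

lemma integral_playCount_le (hImeas : ∀ t, Measurable (I t)) (hμ : μ i < μ j) (n : ℕ) :
    ∫ ω, (playCount I i n ω : ℝ) ∂P ≤ 8 * log n / (μ j - μ i) ^ 2 + 3 := by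
  set x := 8 * log n / (μ j - μ i) ^ 2
  have hx : 0 ≤ x := div_nonneg (mul_nonneg (by norm_num) (log_natCast_nonneg n)) (sq_nonneg _)
  set ℓ := max 1 ⌈x⌉₊
  have hℓx : (ℓ : ℝ) ≤ x + 1 := by
    rw [Nat.cast_max, Nat.cast_one]
    exact max_le (by linarith) (Nat.ceil_lt_add_one hx).le
  have hℓt : ∀ t ∈ range n, 8 * log (t + 1) / (μ j - μ i) ^ 2 ≤ ℓ := fun t ht ↦ by
    have htn : (t + 1 : ℝ) ≤ n := by exact_mod_cast mem_range.1 ht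
    calc 8 * log (t + 1) / (μ j - μ i) ^ 2 ≤ 8 * log n / (μ j - μ i) ^ 2 := by gcongr
      _ ≤ (ℓ : ℝ) := (Nat.le_ceil x).trans (by exact_mod_cast le_max_right 1 ⌈x⌉₊)
  calc ∫ ω, (playCount I i n ω : ℝ) ∂P
      ≤ ℓ + ∑ t ∈ range n, P.real {ω | I t ω = i ∧ ℓ ≤ playCount I i t ω} :=
        integral_playCount_le_add_sum_measureReal hImeas i n ℓ
    _ ≤ ℓ + ∑ t ∈ range n, (2 * t / (t + 1) ^ 4 : ℝ) := by
        gcongr with t ht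
        exact hI.measureReal_play_le hRmeas hRrange hindep hmean hμ
          (Nat.one_pos.trans_le (le_max_left _ _)) (hℓt t ht)
    _ ≤ x + 3 := by linarith [sum_range_two_mul_div_pow_four_le n]

end IsUCB1Policy
end Regret

theorem ucb1_regret_bound_general {Ω : Type*} [MeasurableSpace Ω]
    (P : Measure Ω) [IsProbabilityMeasure P] {K : ℕ}
    (R : Fin K → ℕ → Ω → ℝ) (hRmeas : ∀ i s, Measurable (R i s))
    (hRrange : ∀ i s ω, R i s ω ∈ Set.Icc (0 : ℝ) 1)
    (hindep : iIndepFun (fun p : Fin K × ℕ => R p.1 p.2) P)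
    (μ : Fin K → ℝ) (hmean : ∀ i s, ∫ ω, R i s ω ∂P = μ i)
    (μstar : ℝ) (hμstar : IsGreatest (Set.range μ) μstar)
    (I : ℕ → Ω → Fin K) (hImeas : ∀ t, Measurable (I t)) (hI : IsUCB1Policy R I)
    (n : ℕ) :
    ∑ i ∈ Finset.univ.filter (fun i => μ i < μstar),
        (μstar - μ i) * ∫ ω, (playCount I i n ω : ℝ) ∂P
      ≤ 8 * ∑ i ∈ Finset.univ.filter (fun i => μ i < μstar),
            Real.log n / (μstar - μ i)
        + (1 + Real.pi ^ 2 / 3) * ∑ i : Fin K, (μstar - μ i) := by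
  obtain ⟨⟨istar, rfl⟩, hmax⟩ := hμstar
  have hgap : ∀ i, 0 ≤ μ istar - μ i := fun i ↦ sub_nonneg.2 (hmax ⟨i, rfl⟩)
  calc ∑ i ∈ univ.filter (fun i ↦ μ i < μ istar),
          (μ istar - μ i) * ∫ ω, (playCount I i n ω : ℝ) ∂P
      ≤ ∑ i ∈ univ.filter (fun i ↦ μ i < μ istar),
          (μ istar - μ i) * (8 * log n / (μ istar - μ i) ^ 2 + 3) :=
        sum_le_sum fun i hi ↦ mul_le_mul_of_nonneg_left (hI.integral_playCount_le hRmeas hRrange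
          hindep hmean hImeas (mem_filter.1 hi).2 n) (hgap i)
    _ = 8 * ∑ i ∈ univ.filter (fun i ↦ μ i < μ istar), log n / (μ istar - μ i)
          + 3 * ∑ i ∈ univ.filter (fun i ↦ μ i < μ istar), (μ istar - μ i) := by
        rw [mul_sum, mul_sum, ← sum_add_distrib]
        refine sum_congr rfl fun i hi ↦ ?_
        have := sub_ne_zero.2 (mem_filter.1 hi).2.ne'
        field_simp
    _ ≤ 8 * ∑ i ∈ univ.filter (fun i ↦ μ i < μ istar), log n / (μ istar - μ i)
          + (1 + π ^ 2 / 3) * ∑ i, (μ istar - μ i) := by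
        have hπ : (3 : ℝ) ≤ 1 + π ^ 2 / 3 := by nlinarith [pi_gt_three]
        have hsub : ∑ i ∈ univ.filter (fun i ↦ μ i < μ istar), (μ istar - μ i)
            ≤ ∑ i, (μ istar - μ i) :=
          sum_le_sum_of_subset_of_nonneg (subset_univ _) fun i _ _ ↦ hgap i
        linarith [mul_le_mul hπ hsub (sum_nonneg fun i _ ↦ hgap i) (by positivity)]

/-- UCB1 regret bound (Auer et al. 2002): for a `K`-armed (`K > 1`) stochastic bandit whose
arms have i.i.d. rewards in `[0,1]` with means `μ i`, independent across arms, the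
pseudo-regret `Σ_{i : μ_i < μ*} (μ* - μ_i)·E[T_i(n)]` of the UCB1 policy after any number `n`
of trials is at most
`8·Σ_{i : μ_i < μ*} (ln n / (μ* - μ_i)) + (1 + π²/3)·Σ_i (μ* - μ_i)`. -/
theorem ucb1_regret_bound {Ω : Type*} [MeasurableSpace Ω]
    (P : Measure Ω) [IsProbabilityMeasure P] {K : ℕ} (hK : 1 < K)
    (R : Fin K → ℕ → Ω → ℝ) (hRmeas : ∀ i s, Measurable (R i s))
    (hRrange : ∀ i s ω, R i s ω ∈ Set.Icc (0 : ℝ) 1)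
    (hiid : ∀ i s, P.map (R i s) = P.map (R i 0))
    (hindep : iIndepFun (fun p : Fin K × ℕ => R p.1 p.2) P)
    (μ : Fin K → ℝ) (hmean : ∀ i s, ∫ ω, R i s ω ∂P = μ i)
    (μstar : ℝ) (hμstar : IsGreatest (Set.range μ) μstar)
    (I : ℕ → Ω → Fin K) (hImeas : ∀ t, Measurable (I t)) (hI : IsUCB1Policy R I)
    (n : ℕ) :
    ∑ i ∈ Finset.univ.filter (fun i => μ i < μstar),
        (μstar - μ i) * ∫ ω, (playCount I i n ω : ℝ) ∂P
      ≤ 8 * ∑ i ∈ Finset.univ.filter (fun i => μ i < μstar),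
            Real.log n / (μstar - μ i)
        + (1 + Real.pi ^ 2 / 3) * ∑ i : Fin K, (μstar - μ i) :=
  ucb1_regret_bound_general P R hRmeas hRrange hindep μ hmean μstar hμstar I hImeas hI n
end
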